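/- Suppose the coordinates are connected (i ~ j for all i,j) and there exists at least one index that is strongly connected to every other index. Then there exists at least one connecting coordinate, i.e., an index a such that σ_{aj} is non-constant for every j ≠ a. -/

import Mathlib

/-!
Write `a → b` when `σ_{ab}` is non-constant. Because `σ_{ij}(s) + σ_{ji}(t)` never vanishes, the
functional identity, specialised to triples in which some of the derivatives vanish identically,
shows that `→` is transitive on distinct triples and that `a → c`, `b → c`, `b ↛ a` force `a → b`.
By transitivity the out-neighbourhood of `a` is a proper subset of that of `b` whenever
`b → a ↛ b`, so an index of maximal out-degree is dominated by nobody; comparing it with the index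
strongly connected to all others shows that it is a connecting coordinate.
-/

section Relation

variable {α : Type*} {R : α → α → Prop}

theorem setOf_ne_rel_ssubset
    (htrans : ∀ a b c, a ≠ b → b ≠ c → a ≠ c → R a b → R b c → R a c)
    {a b : α} (hab : a ≠ b) (hba : R b a) (hnab : ¬R a b) :
    {x | x ≠ a ∧ R a x} ⊂ {x | x ≠ b ∧ R b x} := by
  refine (Set.ssubset_iff_of_subset ?_).2 ⟨a, ⟨hab, hba⟩, fun h => h.1 rfl⟩
  rintro x ⟨hxa, hax⟩
  have hxb : x ≠ b := by
    rintro rfl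
    exact hnab hax
  exact ⟨hxb, htrans b a x hab.symm hxa.symm hxb.symm hba hax⟩

theorem exists_forall_ne_rel_imp_rel_of_trans [Finite α] [Nonempty α]
    (htrans : ∀ a b c, a ≠ b → b ≠ c → a ≠ c → R a b → R b c → R a c) :
    ∃ a, ∀ b, b ≠ a → R b a → R a b := by
  obtain ⟨a, ha⟩ := Finite.exists_max fun a : α => {x | x ≠ a ∧ R a x}.ncard
  refine ⟨a, fun b hba hRba => by_contra fun hnab => ?_⟩
  exact (ha b).not_gt (Set.ncard_lt_ncard (setOf_ne_rel_ssubset htrans hba.symm hRba hnab))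

theorem exists_forall_ne_rel_of_trans [Finite α]
    (htrans : ∀ a b c, a ≠ b → b ≠ c → a ≠ c → R a b → R b c → R a c)
    (hcommon : ∀ a b c, a ≠ b → a ≠ c → b ≠ c → R a c → R b c → ¬R b a → R a b)
    (hi : ∃ i, ∀ j, j ≠ i → R i j ∨ R j i) :
    ∃ a, ∀ j, j ≠ a → R a j := by
  obtain ⟨i, hi⟩ := hi
  have : Nonempty α := ⟨i⟩
  obtain ⟨a, ha⟩ := exists_forall_ne_rel_imp_rel_of_trans htrans
  refine ⟨a, fun j hja => ?_⟩
  by_cases hai : a = i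
  · subst hai
    exact (hi j hja).elim id (ha j hja)
  have hRai : R a i := (hi a hai).elim (ha i (Ne.symm hai)) id
  by_cases hji : j = i
  · exact hji ▸ hRai
  by_cases hRja : R j a
  · exact ha j hja hRja
  rcases hi j hji with hRij | hRji
  · exact htrans a i j hai (Ne.symm hji) (Ne.symm hja) hRai hRij
  · exact hcommon a j i (Ne.symm hja) hai hji hRai hRji hRja

end Relation

section FunctionalIdentity

variable {ι : Type*} {σ σ' : ι → ι → ℝ → ℝ}

theorem nonconst_trans (hne : ∀ i j, i ≠ j → ∀ s t : ℝ, σ i j s + σ j i t ≠ 0)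
    (heq : ∀ i j k : ι, i ≠ j → j ≠ k → i ≠ k → ∀ s t u : ℝ,
      σ' j i t * σ' k i u * (σ j k t + σ k j u)
        - σ' j i t * σ' k j u * (σ k i u + σ i k s)
        - σ' k i u * σ' j k t * (σ i j s + σ j i t) = 0)
    {a b c : ι} (hab : a ≠ b) (hbc : b ≠ c) (hac : a ≠ c)
    (hRab : ∃ x, σ' a b x ≠ 0) (hRbc : ∃ x, σ' b c x ≠ 0) : ∃ x, σ' a c x ≠ 0 := by
  obtain ⟨u, hu⟩ := hRab
  obtain ⟨t, ht⟩ := hRbc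
  by_contra! hac0
  -- with `σ'_{ac} ≡ 0` only the term `σ'_{bc}(t) σ'_{ab}(u) (σ_{ac}(u) + σ_{ca}(0))` survives
  have H := heq c b a hbc.symm hab.symm hac.symm 0 t u
  simp [hac0 u, ht, hu, hne a c hac u 0] at H

theorem nonconst_of_nonconst_of_const
    (hne : ∀ i j, i ≠ j → ∀ s t : ℝ, σ i j s + σ j i t ≠ 0)
    (heq : ∀ i j k : ι, i ≠ j → j ≠ k → i ≠ k → ∀ s t u : ℝ,
      σ' j i t * σ' k i u * (σ j k t + σ k j u)
        - σ' j i t * σ' k j u * (σ k i u + σ i k s)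
        - σ' k i u * σ' j k t * (σ i j s + σ j i t) = 0)
    {a b c : ι} (hab : a ≠ b) (hac : a ≠ c) (hbc : b ≠ c)
    (hRac : ∃ x, σ' a c x ≠ 0) (hRbc : ∃ x, σ' b c x ≠ 0) (hba : ¬∃ x, σ' b a x ≠ 0) :
    ∃ x, σ' a b x ≠ 0 := by
  obtain ⟨t, ht⟩ := hRac
  obtain ⟨u, hu⟩ := hRbc
  replace hba := not_exists_not.mp hba
  by_contra! hab0
  -- with `σ'_{ab} ≡ σ'_{ba} ≡ 0` only the term `σ'_{ac}(t) σ'_{bc}(u) (σ_{ab}(t) + σ_{ba}(u))` survives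
  have H := heq c a b hac.symm hab hbc.symm 0 t u
  simp [hba u, hab0 t, ht, hu, hne a b hab t u] at H

end FunctionalIdentity

theorem exists_connecting_coordinate_general (n : ℕ)
    (σ σ' : Fin n → Fin n → ℝ → ℝ)
    (hne : ∀ i j : Fin n, i ≠ j → ∀ s t : ℝ, σ i j s + σ j i t ≠ 0)
    (heq : ∀ i j k : Fin n, i ≠ j → j ≠ k → i ≠ k → ∀ s t u : ℝ,
      σ' j i t * σ' k i u * (σ j k t + σ k j u)
        - σ' j i t * σ' k j u * (σ k i u + σ i k s)
        - σ' k i u * σ' j k t * (σ i j s + σ j i t) = 0)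
    (hS : ∃ i : Fin n, ∀ j : Fin n, j ≠ i →
      ((∃ x, σ' i j x ≠ 0) ∨ (∃ x, σ' j i x ≠ 0))) :
    ∃ a : Fin n, ∀ j : Fin n, j ≠ a → ∃ x, σ' a j x ≠ 0 :=
  exists_forall_ne_rel_of_trans
    (fun _ _ _ hab hbc hac => nonconst_trans hne heq hab hbc hac)
    (fun _ _ _ hab hac hbc => nonconst_of_nonconst_of_const hne heq hab hac hbc) hS

/-- If the coordinates are connected and some index is strongly
connected to every other index, then there exists a connecting coordinate, i.e.
an index `a` such that `σ a j` is non-constant for every `j ≠ a`. -/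
theorem exists_connecting_coordinate (n : ℕ) (hn : 3 ≤ n)
    (σ σ' : Fin n → Fin n → ℝ → ℝ)
    (hderiv : ∀ i j : Fin n, i ≠ j → ∀ x : ℝ, HasDerivAt (σ i j) (σ' i j x) x)
    (hne : ∀ i j : Fin n, i ≠ j → ∀ s t : ℝ, σ i j s + σ j i t ≠ 0)
    (heq : ∀ i j k : Fin n, i ≠ j → j ≠ k → i ≠ k → ∀ s t u : ℝ,
      σ' j i t * σ' k i u * (σ j k t + σ k j u)
        - σ' j i t * σ' k j u * (σ k i u + σ i k s)
        - σ' k i u * σ' j k t * (σ i j s + σ j i t) = 0)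
    (hconn : ∀ i j : Fin n,
      i = j ∨ ((∃ x, σ' i j x ≠ 0) ∨ (∃ x, σ' j i x ≠ 0)) ∨
        ∃ k, k ≠ i ∧ k ≠ j ∧ (∃ x, σ' k i x ≠ 0) ∧ (∃ x, σ' k j x ≠ 0))
    (hS : ∃ i : Fin n, ∀ j : Fin n, j ≠ i →
      ((∃ x, σ' i j x ≠ 0) ∨ (∃ x, σ' j i x ≠ 0))) :
    ∃ a : Fin n, ∀ j : Fin n, j ≠ a → ∃ x, σ' a j x ≠ 0 :=
  exists_connecting_coordinate_general n σ σ' hne heq hS
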